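/- Let q, a ∈ ℂ with |q| < 1 and |a| < 1. Then ∑_{n=1}^{∞} (q;q)_{n−1} a^n / ((1 − q^n)(a;q)_n) = ∑_{m=1}^{∞} m a^m / (1 − q^m), where both infinite series converge absolutely. -/

import Mathlib

/-!
Expanding `1 / (a;q)_{n+1}` by the q-binomial theorem
`∑_k (q^{k+1};q)_n z^k = (q;q)_n / (z;q)_{n+1}` turns the left side into the double series
`∑_{n,k} a^{n+1} / (1 - q^{n+1}) · (q^{k+1};q)_n a^k`, which converges absolutely because
`(q^{k+1};q)_n` is bounded uniformly in `n` and `k`. Summed along the diagonals `n + k = m`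
instead, it gives the right side, by the finite identity
`∑_{n+k=m} (q^{k+1};q)_{n+1} / (1 - q^{n+1}) = m + 1`.
-/

open Finset

/-- Finite q-Pochhammer symbol `(a;q)_n = ∏_{k=0}^{n-1} (1 - a q^k)`. -/
noncomputable def qPoch (q a : ℂ) (n : ℕ) : ℂ :=
  ∏ k ∈ Finset.range n, (1 - a * q ^ k)

/-- Infinite q-Pochhammer symbol `(a;q)_∞ = ∏_{k=0}^{∞} (1 - a q^k)`. -/
noncomputable def qPochInf (q a : ℂ) : ℂ :=
  ∏' k : ℕ, (1 - a * q ^ k)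

/-- Gaussian (q-binomial) coefficient `[N choose n]_q`. -/
noncomputable def qBinom (q : ℂ) (N n : ℕ) : ℂ :=
  qPoch q q N / (qPoch q q n * qPoch q q (N - n))

section Algebra

variable (q a : ℂ)

@[simp] lemma qPoch_zero : qPoch q a 0 = 1 := prod_range_zero _

lemma qPoch_succ (n : ℕ) : qPoch q a (n + 1) = qPoch q a n * (1 - a * q ^ n) :=
  prod_range_succ _ n

lemma qPoch_succ' (n : ℕ) : qPoch q a (n + 1) = (1 - a) * qPoch q (a * q) n := by
  simp only [qPoch, prod_range_succ', pow_succ', pow_zero, mul_one, mul_comm, mul_left_comm,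
    mul_assoc]

/- Since `(q^{k+1};q)_n = (q;q)_{n+k} / (q;q)_k = (q;q)_n [n+k choose k]_q`, these are the two
q-Pascal rules for Gaussian binomial coefficients, cleared of denominators. -/
lemma qPoch_pow_pascal (k n : ℕ) :
    qPoch q (q ^ (k + 2)) (n + 1) =
      (1 - q ^ (n + 1)) * qPoch q (q ^ (k + 2)) n +
        q ^ (n + 1) * qPoch q (q ^ (k + 1)) (n + 1) := by
  rw [qPoch_succ, qPoch_succ' q (q ^ (k + 1)), ← pow_succ]; ring

lemma qPoch_pow_pascal' (k n : ℕ) :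
    qPoch q (q ^ (k + 2)) (n + 1) =
      q ^ (k + 1) * (1 - q ^ (n + 1)) * qPoch q (q ^ (k + 2)) n +
        qPoch q (q ^ (k + 1)) (n + 1) := by
  rw [qPoch_succ, qPoch_succ' q (q ^ (k + 1)), ← pow_succ]; ring

lemma sum_antidiagonal_pow_mul_qPoch (m : ℕ) :
    ∑ p ∈ antidiagonal m, q ^ p.2 * qPoch q (q ^ (p.2 + 1)) p.1 = 1 := by
  induction m with
  | zero => simp
  | succ m ih =>
    have hdiag : ∀ p ∈ antidiagonal m, q ^ p.2 * qPoch q (q ^ (p.2 + 1)) (p.1 + 1) =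
        (1 - q ^ (m + 1)) * (q ^ p.2 * qPoch q (q ^ (p.2 + 1)) p.1) := by
      intro p hp
      rw [qPoch_succ, ← pow_add, ← mem_antidiagonal.1 hp]
      ring_nf
    rw [Nat.sum_antidiagonal_succ, sum_congr rfl hdiag, ← mul_sum, ih]
    simp

lemma sum_antidiagonal_qPoch_div_one_sub_pow (hq : ∀ n : ℕ, 1 - q ^ (n + 1) ≠ 0) (m : ℕ) :
    ∑ p ∈ antidiagonal m, qPoch q (q ^ (p.2 + 1)) (p.1 + 1) / (1 - q ^ (p.1 + 1)) = m + 1 := by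
  induction m with
  | zero =>
    simpa [qPoch_succ] using div_self (by simpa using hq 0)
  | succ m ih =>
    have hpascal : ∀ p ∈ antidiagonal m,
        qPoch q (q ^ (p.2 + 2)) (p.1 + 1) / (1 - q ^ (p.1 + 1)) =
          q ^ (p.2 + 1) * qPoch q (q ^ (p.2 + 2)) p.1 +
            qPoch q (q ^ (p.2 + 1)) (p.1 + 1) / (1 - q ^ (p.1 + 1)) := by
      intro p _
      rw [qPoch_pow_pascal', add_div, mul_right_comm, mul_div_assoc, div_self (hq _), mul_one]
    have hcorner : qPoch q (q ^ 1) (m + 2) / (1 - q ^ (m + 2)) = qPoch q (q ^ 1) (m + 1) := by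
      rw [qPoch_succ, ← pow_add, add_comm 1, mul_div_cancel_right₀ _ (hq _)]
    have hone := sum_antidiagonal_pow_mul_qPoch q (m + 1)
    rw [Nat.sum_antidiagonal_succ'] at hone ⊢
    simp only [zero_add, pow_zero, one_mul] at hone ⊢
    rw [sum_congr rfl hpascal, sum_add_distrib, ih, hcorner, ← add_assoc, hone]
    push_cast; ring

end Algebra

lemma one_sub_ne_zero_of_norm_lt_one {R : Type*} [NormedRing R] [NormOneClass R] {x : R}
    (hx : ‖x‖ < 1) : 1 - x ≠ 0 :=
  sub_ne_zero.2 fun h => by simp [← h] at hx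

section Analysis

variable {q : ℂ}

lemma qPoch_ne_zero (hq : ‖q‖ ≤ 1) {a : ℂ} (ha : ‖a‖ < 1) (n : ℕ) : qPoch q a n ≠ 0 :=
  prod_ne_zero_iff.2 fun k _ => one_sub_ne_zero_of_norm_lt_one <| by
    rw [norm_mul, norm_pow]
    exact mul_lt_one_of_nonneg_of_lt_one_left (norm_nonneg a) ha (pow_le_one₀ (norm_nonneg q) hq)

lemma norm_qPoch_le (hq : ‖q‖ < 1) (a : ℂ) (n : ℕ) :
    ‖qPoch q a n‖ ≤ Real.exp (‖a‖ / (1 - ‖q‖)) := by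
  have hfactor : ∀ k, ‖1 - a * q ^ k‖ ≤ Real.exp (‖a‖ * ‖q‖ ^ k) := fun k =>
    calc ‖1 - a * q ^ k‖ ≤ ‖a‖ * ‖q‖ ^ k + 1 := by
          simpa [add_comm] using norm_sub_le (1 : ℂ) (a * q ^ k)
      _ ≤ _ := Real.add_one_le_exp _
  calc ‖qPoch q a n‖ = ∏ k ∈ range n, ‖1 - a * q ^ k‖ := norm_prod _ _
    _ ≤ ∏ k ∈ range n, Real.exp (‖a‖ * ‖q‖ ^ k) :=
        prod_le_prod (fun _ _ => norm_nonneg _) fun k _ => hfactor k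
    _ = Real.exp (‖a‖ * ∑ k ∈ range n, ‖q‖ ^ k) := by rw [← Real.exp_sum, mul_sum]
    _ ≤ Real.exp (‖a‖ / (1 - ‖q‖)) := by
        gcongr
        rw [div_eq_mul_inv]
        gcongr
        simpa [← range_eq_Ico] using geom_sum_Ico_le_of_lt_one (m := 0) (n := n) (norm_nonneg q) hq

lemma norm_qPoch_pow_succ_le (hq : ‖q‖ < 1) (k n : ℕ) :
    ‖qPoch q (q ^ (k + 1)) n‖ ≤ Real.exp (1 / (1 - ‖q‖)) := by
  refine (norm_qPoch_le hq _ n).trans (Real.exp_le_exp.2 (div_le_div_of_nonneg_right ?_ ?_))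
  · rw [norm_pow]; exact pow_le_one₀ (norm_nonneg q) hq.le
  · linarith

lemma hasSum_qPoch_mul_pow (hq : ‖q‖ < 1) {z : ℂ} (hz : ‖z‖ < 1) (n : ℕ) :
    HasSum (fun k => qPoch q (q ^ (k + 1)) n * z ^ k) (qPoch q q n / qPoch q z (n + 1)) := by
  induction n with
  | zero => simpa [qPoch_succ] using hasSum_geometric_of_norm_lt_one hz
  | succ n ih =>
    obtain ⟨s, hs⟩ : Summable fun k => qPoch q (q ^ (k + 1)) (n + 1) * z ^ k := by
      refine .of_norm_bounded ((summable_geometric_of_lt_one (norm_nonneg z) hz).mul_left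
        (Real.exp (1 / (1 - ‖q‖)))) fun k => ?_
      rw [norm_mul, norm_pow]
      gcongr
      exact norm_qPoch_pow_succ_le hq k (n + 1)
    have htail : HasSum (fun k => qPoch q (q ^ (k + 2)) (n + 1) * z ^ (k + 1))
        ((1 - q ^ (n + 1)) * (qPoch q q n / qPoch q z (n + 1) - qPoch q q n) +
          q ^ (n + 1) * z * s) := by
      have ih_tail := (hasSum_nat_add_iff' 1).2 ih
      simp only [range_one, sum_singleton, zero_add, pow_one, pow_zero, mul_one] at ih_tail
      refine ((ih_tail.mul_left (1 - q ^ (n + 1))).add (hs.mul_left (q ^ (n + 1) * z))).congr_fun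
        fun k => ?_
      rw [qPoch_pow_pascal]
      ring
    have hs_tail := (hasSum_nat_add_iff' 1).2 hs
    simp only [range_one, sum_singleton, zero_add, pow_one, pow_zero, mul_one] at hs_tail
    have hrec := hs_tail.unique htail
    have hz₁ := qPoch_ne_zero hq.le hz (n + 1)
    have hz₂ := qPoch_ne_zero hq.le hz (n + 2)
    rw [qPoch_succ] at hz₂
    convert hs using 1
    rw [qPoch_succ q z (n + 1), qPoch_succ q q n, div_eq_iff hz₂]
    rw [qPoch_succ q q n] at hrec
    field_simp at hrec
    linear_combination -hrec

lemma one_sub_pow_succ_ne_zero (hq : ‖q‖ < 1) (n : ℕ) : 1 - q ^ (n + 1) ≠ 0 :=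
  one_sub_ne_zero_of_norm_lt_one <| by
    rw [norm_pow]; exact pow_lt_one₀ (norm_nonneg q) hq n.succ_ne_zero

lemma one_sub_norm_le_norm_one_sub_pow (hq : ‖q‖ ≤ 1) (n : ℕ) :
    1 - ‖q‖ ≤ ‖1 - q ^ (n + 1)‖ :=
  calc 1 - ‖q‖ ≤ ‖(1 : ℂ)‖ - ‖q ^ (n + 1)‖ := by
        rw [norm_one, norm_pow]; gcongr; exact pow_le_of_le_one (norm_nonneg q) hq n.succ_ne_zero
    _ ≤ ‖1 - q ^ (n + 1)‖ := norm_sub_norm_le _ _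

theorem HasSum.sum_antidiagonal {A α : Type*} [AddCommMonoid A] [HasAntidiagonal A]
    [AddCommMonoid α] [TopologicalSpace α] [ContinuousAdd α] [RegularSpace α]
    {f : A × A → α} {a : α} (hf : HasSum f a) :
    HasSum (fun n => ∑ p ∈ antidiagonal n, f p) a :=
  (HasAntidiagonal.sigmaAntidiagonalEquivProd.hasSum_iff.2 hf).sigma fun n =>
    Finset.hasSum (antidiagonal n) f

noncomputable def doubleSeriesTerm (q a : ℂ) (p : ℕ × ℕ) : ℂ :=
  a ^ (p.1 + 1) / (1 - q ^ (p.1 + 1)) * (qPoch q (q ^ (p.2 + 1)) p.1 * a ^ p.2)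

variable {a : ℂ}

lemma summable_doubleSeriesTerm (hq : ‖q‖ < 1) (ha : ‖a‖ < 1) :
    Summable (doubleSeriesTerm q a) := by
  have hgeom := summable_geometric_of_lt_one (norm_nonneg a) ha
  have hrow : Summable fun n : ℕ => ‖a‖ ^ (n + 1) / (1 - ‖q‖) := by
    simpa only [pow_succ] using (hgeom.mul_right ‖a‖).div_const (1 - ‖q‖)
  have hcol : Summable fun k : ℕ => Real.exp (1 / (1 - ‖q‖)) * ‖a‖ ^ k := hgeom.mul_left _
  have hq' : 0 < 1 - ‖q‖ := by linarith
  refine .of_norm_bounded (hrow.mul_of_nonneg hcol (fun _ => by positivity)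
    fun _ => by positivity) fun p => ?_
  rw [doubleSeriesTerm, norm_mul, norm_mul, norm_div, norm_pow, norm_pow]
  gcongr
  · exact one_sub_norm_le_norm_one_sub_pow hq.le p.1
  · exact norm_qPoch_pow_succ_le hq p.2 p.1

lemma hasSum_doubleSeriesTerm_row (hq : ‖q‖ < 1) (ha : ‖a‖ < 1) (n : ℕ) :
    HasSum (fun k => doubleSeriesTerm q a (n, k))
      (qPoch q q n * a ^ (n + 1) / ((1 - q ^ (n + 1)) * qPoch q a (n + 1))) := by
  have h := (hasSum_qPoch_mul_pow hq ha n).mul_left (a ^ (n + 1) / (1 - q ^ (n + 1)))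
  rwa [div_mul_div_comm, mul_comm (a ^ (n + 1))] at h

lemma sum_antidiagonal_doubleSeriesTerm (hq : ∀ n : ℕ, 1 - q ^ (n + 1) ≠ 0) (m : ℕ) :
    ∑ p ∈ antidiagonal m, doubleSeriesTerm q a p = (m + 1) * a ^ (m + 1) / (1 - q ^ (m + 1)) := by
  have hterm : ∀ p ∈ antidiagonal m, doubleSeriesTerm q a p =
      a ^ (m + 1) / (1 - q ^ (m + 1)) *
        (qPoch q (q ^ (p.2 + 1)) (p.1 + 1) / (1 - q ^ (p.1 + 1))) := by
    intro p hp
    rw [HasAntidiagonal.mem_antidiagonal] at hp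
    subst hp
    have h₁ := hq p.1
    have h₂ := hq (p.1 + p.2)
    rw [doubleSeriesTerm, qPoch_succ]
    field_simp
    ring
  rw [sum_congr rfl hterm, ← mul_sum, sum_antidiagonal_qPoch_div_one_sub_pow q hq]
  ring

end Analysis

theorem stmt_8 (q a : ℂ) (hq : ‖q‖ < 1) (ha : ‖a‖ < 1) :
    Summable (fun n : ℕ =>
        qPoch q q n * a ^ (n + 1) / ((1 - q ^ (n + 1)) * qPoch q a (n + 1))) ∧
    Summable (fun m : ℕ => ((m : ℂ) + 1) * a ^ (m + 1) / (1 - q ^ (m + 1))) ∧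
    ∑' n : ℕ, qPoch q q n * a ^ (n + 1) / ((1 - q ^ (n + 1)) * qPoch q a (n + 1))
      = ∑' m : ℕ, ((m : ℂ) + 1) * a ^ (m + 1) / (1 - q ^ (m + 1)) := by
  obtain ⟨s, hs⟩ := summable_doubleSeriesTerm hq ha
  have hrows := hs.prod_fiberwise (hasSum_doubleSeriesTerm_row hq ha)
  have hdiagonals := hs.sum_antidiagonal.congr_fun fun m =>
    (sum_antidiagonal_doubleSeriesTerm (a := a) (one_sub_pow_succ_ne_zero hq) m).symm
  exact ⟨hrows.summable, hdiagonals.summable, hrows.tsum_eq.trans hdiagonals.tsum_eq.symm⟩
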